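/- Let ξ be a real random variable with the exponential distribution of rate 1. Then lim_{a→∞} (e^a − 1)·( 1 − E[ ∏_{x=1}^∞ (1 − e^{−ξ − a x}) ] ) = 1/2. -/

import Mathlib

open MeasureTheory ProbabilityTheory Filter ENNReal

/-!
Write `U = e^{-ξ}`, which is uniform on `[0, 1]`, so `E U = 1/2`, and `q = e^{-a}`. The product is
`∏_{x ≥ 1} (1 - U q^x)`, and pointwise `1 - U q / (1 - q) ≤ ∏_{x ≥ 1} (1 - U q^x) ≤ 1 - U q`
(the lower bound is the Weierstrass product inequality plus a geometric series). Taking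
expectations and multiplying by `e^a - 1 = (1 - q) / q` squeezes the quantity between
`(1 - q) / 2` and `1 / 2`.
-/

theorem Finset.one_sub_sum_le_prod_one_sub {ι R : Type*} [CommRing R] [LinearOrder R]
    [IsStrictOrderedRing R] (s : Finset ι) {u : ι → R} (h0 : ∀ i ∈ s, 0 ≤ u i)
    (h1 : ∀ i ∈ s, u i ≤ 1) : 1 - ∑ i ∈ s, u i ≤ ∏ i ∈ s, (1 - u i) := by
  classical
  induction s using Finset.cons_induction with
  | empty => simp
  | cons a s ha ih =>
    simp only [Finset.mem_cons, forall_eq_or_imp] at h0 h1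
    rw [Finset.sum_cons, Finset.prod_cons]
    have hS : 0 ≤ ∑ i ∈ s, u i := Finset.sum_nonneg h0.2
    nlinarith [ih h0.2 h1.2, h0.1, h1.1]

theorem geom_sum_Icc_one_le {q : ℝ} (hq0 : 0 ≤ q) (hq1 : q < 1) (N : ℕ) :
    ∑ x ∈ Finset.Icc 1 N, q ^ x ≤ q / (1 - q) := by
  rw [← Finset.Ico_add_one_right_eq_Icc]
  simpa using geom_sum_Ico_le_of_lt_one hq0 hq1 (m := 1) (n := N + 1)

/-- The `q`-Pochhammer symbol `(u q; q)_∞ = ∏_{x ≥ 1} (1 - u q^x)`, as the infimum of its partial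
products. -/
noncomputable def qPochhammerInf (u q : ℝ) : ℝ :=
  ⨅ N : ℕ, ∏ x ∈ Finset.Icc 1 N, (1 - u * q ^ x)

section qPochhammerInf

variable {u q : ℝ}

theorem one_sub_mul_pow_nonneg (hu1 : u ≤ 1) (hq0 : 0 ≤ q) (hq1 : q ≤ 1) (x : ℕ) :
    0 ≤ 1 - u * q ^ x := by
  have : u * q ^ x ≤ 1 := mul_le_one₀ hu1 (by positivity) (pow_le_one₀ hq0 hq1)
  linarith

theorem qPochhammerInf_nonneg (hu1 : u ≤ 1) (hq0 : 0 ≤ q) (hq1 : q ≤ 1) :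
    0 ≤ qPochhammerInf u q :=
  le_ciInf fun _ ↦ Finset.prod_nonneg fun x _ ↦ one_sub_mul_pow_nonneg hu1 hq0 hq1 x

theorem qPochhammerInf_le (hu1 : u ≤ 1) (hq0 : 0 ≤ q) (hq1 : q ≤ 1) :
    qPochhammerInf u q ≤ 1 - u * q := by
  have hbdd : BddBelow (Set.range fun N : ℕ ↦ ∏ x ∈ Finset.Icc 1 N, (1 - u * q ^ x)) :=
    ⟨0, by
      rintro _ ⟨N, rfl⟩
      exact Finset.prod_nonneg fun x _ ↦ one_sub_mul_pow_nonneg hu1 hq0 hq1 x⟩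
  simpa [qPochhammerInf] using ciInf_le hbdd 1

theorem le_qPochhammerInf (hu0 : 0 ≤ u) (hu1 : u ≤ 1) (hq0 : 0 ≤ q) (hq1 : q < 1) :
    1 - u * (q / (1 - q)) ≤ qPochhammerInf u q := by
  refine le_ciInf fun N ↦ ?_
  calc 1 - u * (q / (1 - q)) ≤ 1 - ∑ x ∈ Finset.Icc 1 N, u * q ^ x := by
        rw [← Finset.mul_sum]
        gcongr
        exact geom_sum_Icc_one_le hq0 hq1 N
    _ ≤ _ := Finset.one_sub_sum_le_prod_one_sub _
        (fun x _ ↦ by positivity)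
        (fun x _ ↦ by linarith [one_sub_mul_pow_nonneg hu1 hq0 hq1.le x])

end qPochhammerInf

section Expectation

variable {Ω : Type*} [MeasurableSpace Ω] {μ : Measure Ω} [IsProbabilityMeasure μ]

theorem measurable_qPochhammerInf {U : Ω → ℝ} (hU : Measurable U) (q : ℝ) :
    Measurable fun ω ↦ qPochhammerInf (U ω) q := by
  unfold qPochhammerInf
  measurability

theorem one_sub_integral_qPochhammerInf_mem_Icc {U : Ω → ℝ} (hU : Measurable U)
    (hU0 : ∀ᵐ ω ∂μ, 0 ≤ U ω) (hU1 : ∀ᵐ ω ∂μ, U ω ≤ 1) {q : ℝ} (hq0 : 0 ≤ q) (hq1 : q < 1) :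
    1 - ∫ ω, qPochhammerInf (U ω) q ∂μ ∈ Set.Icc (q * ∫ ω, U ω ∂μ) (q / (1 - q) * ∫ ω, U ω ∂μ) := by
  have hUint : Integrable U μ := by
    refine .of_bound hU.aestronglyMeasurable 1 ?_
    filter_upwards [hU0, hU1] with ω h0 h1
    rwa [Real.norm_of_nonneg h0]
  have hPint : Integrable (fun ω ↦ qPochhammerInf (U ω) q) μ := by
    refine .of_bound (measurable_qPochhammerInf hU q).aestronglyMeasurable 1 ?_
    filter_upwards [hU0, hU1] with ω h0 h1
    rw [Real.norm_of_nonneg (qPochhammerInf_nonneg h1 hq0 hq1.le)]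
    linarith [qPochhammerInf_le h1 hq0 hq1.le, mul_nonneg h0 hq0]
  have hupper : ∫ ω, qPochhammerInf (U ω) q ∂μ ≤ ∫ ω, (1 - U ω * q) ∂μ :=
    integral_mono_ae hPint ((integrable_const 1).sub (hUint.mul_const q))
      (by filter_upwards [hU1] with ω h1 using qPochhammerInf_le h1 hq0 hq1.le)
  have hlower : ∫ ω, (1 - U ω * (q / (1 - q))) ∂μ ≤ ∫ ω, qPochhammerInf (U ω) q ∂μ :=
    integral_mono_ae ((integrable_const 1).sub (hUint.mul_const _)) hPint
      (by filter_upwards [hU0, hU1] with ω h0 h1 using le_qPochhammerInf h0 h1 hq0 hq1)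
  rw [integral_sub (integrable_const 1) (hUint.mul_const _), integral_mul_const] at hupper hlower
  simp only [integral_const, probReal_univ, one_smul] at hupper hlower
  constructor <;> linarith

end Expectation

section ExponentialTail

variable {Ω : Type*} [MeasurableSpace Ω] {μ : Measure Ω} [IsProbabilityMeasure μ] {ξ : Ω → ℝ}

theorem ae_nonneg_of_exp_tail (hmeas : Measurable ξ)
    (hexp : ∀ t : ℝ, 0 ≤ t → μ {ω | t < ξ ω} = ENNReal.ofReal (Real.exp (-t))) :
    ∀ᵐ ω ∂μ, 0 ≤ ξ ω := by
  have hpos : ∀ᵐ ω ∂μ, 0 < ξ ω :=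
    (ae_iff_measure_eq (measurableSet_lt measurable_const hmeas).nullMeasurableSet).2 <| by
      simpa using hexp 0 le_rfl
  exact hpos.mono fun _ h ↦ h.le

theorem ae_exp_neg_le_one_of_exp_tail (hmeas : Measurable ξ)
    (hexp : ∀ t : ℝ, 0 ≤ t → μ {ω | t < ξ ω} = ENNReal.ofReal (Real.exp (-t))) :
    ∀ᵐ ω ∂μ, Real.exp (-ξ ω) ≤ 1 := by
  filter_upwards [ae_nonneg_of_exp_tail hmeas hexp] with ω h
  exact Real.exp_le_one_iff.2 (neg_nonpos.2 h)

theorem measureReal_le_exp_neg_of_exp_tail (hmeas : Measurable ξ)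
    (hexp : ∀ t : ℝ, 0 ≤ t → μ {ω | t < ξ ω} = ENNReal.ofReal (Real.exp (-t)))
    {t : ℝ} (ht : t ∈ Set.Ioc 0 1) :
    μ.real {ω | t ≤ Real.exp (-ξ ω)} = 1 - t := by
  have hset : {ω | t ≤ Real.exp (-ξ ω)} = {ω | -Real.log t < ξ ω}ᶜ := by
    ext ω
    simp only [Set.mem_ofPred_eq, Set.mem_compl_iff, not_lt, ← Real.log_le_iff_le_exp ht.1]
    constructor <;> intro h <;> linarith
  rw [hset, probReal_compl_eq_one_sub (measurableSet_lt measurable_const hmeas), measureReal_def,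
    hexp _ (neg_nonneg.2 (Real.log_nonpos ht.1.le ht.2)), neg_neg, Real.exp_log ht.1,
    ENNReal.toReal_ofReal ht.1.le]

theorem integral_exp_neg_of_exp_tail (hmeas : Measurable ξ)
    (hexp : ∀ t : ℝ, 0 ≤ t → μ {ω | t < ξ ω} = ENNReal.ofReal (Real.exp (-t))) :
    ∫ ω, Real.exp (-ξ ω) ∂μ = 1 / 2 := by
  have hmeas' : Measurable fun ω ↦ Real.exp (-ξ ω) := by fun_prop
  have hle := ae_exp_neg_le_one_of_exp_tail hmeas hexp
  have hint : Integrable (fun ω ↦ Real.exp (-ξ ω)) μ := by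
    refine .of_bound hmeas'.aestronglyMeasurable 1 ?_
    filter_upwards [hle] with ω h
    rwa [Real.norm_of_nonneg (Real.exp_pos _).le]
  rw [hint.integral_eq_integral_Ioc_meas_le (ae_of_all _ fun ω ↦ (Real.exp_pos _).le) hle,
    setIntegral_congr_fun measurableSet_Ioc fun t ht ↦
      measureReal_le_exp_neg_of_exp_tail hmeas hexp ht,
    ← intervalIntegral.integral_of_le zero_le_one, intervalIntegral.integral_sub
      intervalIntegrable_const intervalIntegral.intervalIntegrable_id]
  norm_num

end ExponentialTail

theorem exp_neg_sub_mul_natCast (s a : ℝ) (x : ℕ) :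
    Real.exp (-s - a * x) = Real.exp (-s) * Real.exp (-a) ^ x := by
  rw [← Real.exp_nat_mul, ← Real.exp_add]
  ring_nf

theorem mul_one_sub_integral_qPochhammerInf_exp_neg_mem_Icc {Ω : Type*} [MeasurableSpace Ω]
    {μ : Measure Ω} [IsProbabilityMeasure μ] {U : Ω → ℝ} (hU : Measurable U)
    (hU0 : ∀ᵐ ω ∂μ, 0 ≤ U ω) (hU1 : ∀ᵐ ω ∂μ, U ω ≤ 1) (hmean : ∫ ω, U ω ∂μ = 1 / 2)
    {a : ℝ} (ha : 0 < a) :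
    (Real.exp a - 1) * (1 - ∫ ω, qPochhammerInf (U ω) (Real.exp (-a)) ∂μ) ∈
      Set.Icc ((1 - Real.exp (-a)) * (1 / 2)) (1 / 2) := by
  have hq1 : Real.exp (-a) < 1 := Real.exp_lt_one_iff.2 (neg_lt_zero.2 ha)
  have hea : 0 < Real.exp a - 1 := sub_pos.2 (Real.one_lt_exp_iff.2 ha)
  obtain ⟨hlo, hhi⟩ := one_sub_integral_qPochhammerInf_mem_Icc hU hU0 hU1
    (Real.exp_pos (-a)).le hq1
  rw [hmean] at hlo hhi
  have hlo_eq : (Real.exp a - 1) * (Real.exp (-a) * (1 / 2)) = (1 - Real.exp (-a)) * (1 / 2) := by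
    rw [Real.exp_neg]; field_simp
  have hhi_eq : (Real.exp a - 1) * (Real.exp (-a) / (1 - Real.exp (-a)) * (1 / 2)) = 1 / 2 := by
    rw [Real.exp_neg]; field_simp [hea.ne']
  exact ⟨hlo_eq ▸ mul_le_mul_of_nonneg_left hlo hea.le,
    hhi_eq ▸ mul_le_mul_of_nonneg_left hhi hea.le⟩

/-- Let `ξ` be exponential of rate 1 (`P(ξ > t) = e^{−t}` for `t ≥ 0`). Then
`lim_{a→∞} (e^a − 1)·(1 − E[∏_{x=1}^∞ (1 − e^{−ξ−ax})]) = 1/2`.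
For each realization and each `a > 0`, the partial products are nonincreasing and
bounded below, so the infinite product equals the infimum of the partial products. -/
theorem stmt_6 {Ω : Type*} [MeasureSpace Ω] [IsProbabilityMeasure (ℙ : Measure Ω)]
    (ξ : Ω → ℝ) (hmeas : Measurable ξ)
    (hexp : ∀ t : ℝ, 0 ≤ t → ℙ {ω | t < ξ ω} = ENNReal.ofReal (Real.exp (-t))) :
    Tendsto (fun a : ℝ =>
        (Real.exp a - 1) *
          (1 - ∫ ω, (⨅ N : ℕ, ∏ x ∈ Finset.Icc 1 N, (1 - Real.exp (-ξ ω - a * x))) ∂ℙ))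
      atTop (nhds (1 / 2)) := by
  have hbounds := fun a (ha : 0 < a) ↦
    mul_one_sub_integral_qPochhammerInf_exp_neg_mem_Icc (μ := ℙ) (by fun_prop)
      (ae_of_all _ fun ω ↦ (Real.exp_pos (-ξ ω)).le) (ae_exp_neg_le_one_of_exp_tail hmeas hexp)
      (integral_exp_neg_of_exp_tail hmeas hexp) ha
  have hlow : Tendsto (fun a : ℝ ↦ (1 - Real.exp (-a)) * (1 / 2)) atTop (nhds (1 / 2)) := by
    simpa using (Real.tendsto_exp_neg_atTop_nhds_zero.const_sub 1).mul_const (1 / 2 : ℝ)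
  simp_rw [exp_neg_sub_mul_natCast]
  refine tendsto_of_tendsto_of_tendsto_of_le_of_le' hlow tendsto_const_nhds ?_ ?_ <;>
    filter_upwards [eventually_gt_atTop 0] with a ha
  exacts [(hbounds a ha).1, (hbounds a ha).2]
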